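/- arXiv:1803.11134 — 9 statements merged into one kernel-verified Lean document; each statement's English description precedes it below -/
import Mathlib

section
/- Let G = (V,E) be a graph and let v, w ∈ V with v ≠ w. Then W_{v,w} ⊆ M_{v,w} and W_{v,w} is a module of G. -/
/-- `M` is a module of the graph `G`: a nonempty vertex set such that every vertex
outside `M` is adjacent either to all of `M` or to none of `M`. -/
def IsModule {V : Type*} (G : SimpleGraph V) (M : Set V) : Prop :=
  M.Nonempty ∧ ∀ v ∉ M, ∀ w ∈ M, ∀ w' ∈ M, (G.Adj v w ↔ G.Adj v w')

/-- `M_{v,w}`: the intersection of all modules of `G` containing both `v` and `w`. -/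
def spanModule {V : Type*} (G : SimpleGraph V) (v w : V) : Set V :=
  ⋂₀ {M : Set V | IsModule G M ∧ v ∈ M ∧ w ∈ M}

/-- Two edges `e`, `e'` of `G` form a wedge: there are three distinct vertices `u`, `v`, `w`
with `e = {u,v}`, `e' = {u,w}`, and `{v,w}` not an edge. -/
def FormWedge {V : Type*} (G : SimpleGraph V) (e e' : Sym2 V) : Prop :=
  ∃ u v w : V, u ≠ v ∧ u ≠ w ∧ v ≠ w ∧ e = s(u, v) ∧ e' = s(u, w) ∧
    e ∈ G.edgeSet ∧ e' ∈ G.edgeSet ∧ ¬ G.Adj v w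

/-- Wedge connectivity: a sequence of edges in which consecutive edges form a wedge. -/
def WedgeConnected {V : Type*} (G : SimpleGraph V) : Sym2 V → Sym2 V → Prop :=
  Relation.ReflTransGen (FormWedge G)

open Classical in
/-- The wedge class of `{v,w}`: the edge class of `G` containing `{v,w}` if `{v,w}` is an
edge of `G`, and otherwise the edge class of the complement graph `Gᶜ` containing `{v,w}`. -/
noncomputable def wedgeClass {V : Type*} (G : SimpleGraph V) (v w : V) : Set (Sym2 V) :=
  if G.Adj v w then {e | WedgeConnected G s(v, w) e} else {e | WedgeConnected Gᶜ s(v, w) e}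

/-- `W_{v,w}`: the union of all (2-element) sets in the wedge class of `{v,w}`. -/
noncomputable def Wset {V : Type*} (G : SimpleGraph V) (v w : V) : Set V :=
  {x | ∃ e ∈ wedgeClass G v w, x ∈ e}

lemma isModule_compl {V : Type*} {G : SimpleGraph V} {M : Set V}
    (h : IsModule G M) : IsModule Gᶜ M := by
  refine ⟨h.1, fun x hx a ha b hb => ?_⟩
  have hxa : x ≠ a := fun e => hx (e ▸ ha)
  have hxb : x ≠ b := fun e => hx (e ▸ hb)
  have := h.2 x hx a ha b hb
  simp only [SimpleGraph.compl_adj]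
  tauto

lemma adj_step {V : Type*} {H : SimpleGraph V} {v w : V} (hvw : H.Adj v w)
    {x : V} (hx : ∀ e, WedgeConnected H s(v, w) e → x ∉ e)
    {p q : V} (hpq : WedgeConnected H s(v, w) s(p, q)) (hE : H.Adj p q)
    (h1 : H.Adj x p) : H.Adj x q := by
  by_contra hnq
  have hxp : x ≠ p := fun h => hx _ hpq (by simp [h])
  have hxq : x ≠ q := fun h => hx _ hpq (by simp [h])
  have hc : WedgeConnected H s(v, w) s(p, x) :=
    hpq.tail ⟨p, q, x, hE.ne, Ne.symm hxp, Ne.symm hxq, rfl, rfl, hE, h1.symm,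
      fun h => hnq h.symm⟩
  exact hx _ hc (by simp)

lemma adj_iff {V : Type*} {H : SimpleGraph V} {v w : V} (hvw : H.Adj v w)
    {x : V} (hx : ∀ e, WedgeConnected H s(v, w) e → x ∉ e)
    {p q : V} (hpq : WedgeConnected H s(v, w) s(p, q)) (hE : H.Adj p q) :
    H.Adj x p ↔ H.Adj x q := by
  constructor
  · exact adj_step hvw hx hpq hE
  · have hsw : s(p, q) = s(q, p) := Sym2.eq_swap
    exact adj_step hvw hx (hsw ▸ hpq) hE.symm

lemma adj_const {V : Type*} {H : SimpleGraph V} {v w : V} (hvw : H.Adj v w)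
    {x : V} (hx : ∀ e, WedgeConnected H s(v, w) e → x ∉ e) :
    ∀ e, WedgeConnected H s(v, w) e → ∀ y ∈ e, (H.Adj x y ↔ H.Adj x v) := by
  intro e he
  induction he with
  | refl =>
    intro y hy
    rcases Sym2.mem_iff.1 hy with rfl | rfl
    · exact Iff.rfl
    · exact (adj_iff hvw hx Relation.ReflTransGen.refl hvw).symm
  | @tail b c h hw ih =>
    have hc : WedgeConnected H s(v, w) c := h.tail hw
    obtain ⟨u, a, p, h1, h2, h3, heq, heq', heE, he'E, hn⟩ := hw
    subst heq heq'
    intro y hy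
    rcases Sym2.mem_iff.1 hy with rfl | rfl
    · exact ih y (Sym2.mem_mk_left _ _)
    · exact (adj_iff hvw hx hc he'E).symm.trans (ih u (Sym2.mem_mk_left _ _))

lemma wc_subset_module {V : Type*} {H : SimpleGraph V} {v w : V}
    {M : Set V} (hM : IsModule H M) (hv : v ∈ M) (hw : w ∈ M) :
    ∀ e, WedgeConnected H s(v, w) e → ∀ y ∈ e, y ∈ M := by
  intro e he
  induction he with
  | refl =>
    intro y hy
    rcases Sym2.mem_iff.1 hy with rfl | rfl <;> assumption
  | @tail b c h hw' ih =>
    obtain ⟨u, a, p, h1, h2, h3, heq, heq', heE, he'E, hn⟩ := hw'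
    subst heq heq'
    intro y hy
    rcases Sym2.mem_iff.1 hy with rfl | rfl
    · exact ih y (Sym2.mem_mk_left _ _)
    · by_contra hbM
      have := hM.2 y hbM u (ih u (Sym2.mem_mk_left _ _)) a (ih a (Sym2.mem_mk_right _ _))
      exact hn (this.1 he'E.symm).symm

lemma isModule_W {V : Type*} {H : SimpleGraph V} {v w : V} (hvw : H.Adj v w) :
    IsModule H {x | ∃ e, WedgeConnected H s(v, w) e ∧ x ∈ e} := by
  constructor
  · exact ⟨v, s(v, w), Relation.ReflTransGen.refl, Sym2.mem_mk_left _ _⟩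
  · intro x hx a ha b hb
    have hx' : ∀ e, WedgeConnected H s(v, w) e → x ∉ e := fun e he hm => hx ⟨e, he, hm⟩
    obtain ⟨ea, hea, haea⟩ := ha
    obtain ⟨eb, heb, hbeb⟩ := hb
    rw [adj_const hvw hx' ea hea a haea, adj_const hvw hx' eb heb b hbeb]

/-- For distinct vertices `v`, `w`, the set `W_{v,w}` is contained in `M_{v,w}` and
is a module of `G`. -/
theorem Wset_subset_spanModule_and_isModule {V : Type*} [Fintype V] [Nonempty V]
    (G : SimpleGraph V) (v w : V) (hvw : v ≠ w) :
    Wset G v w ⊆ spanModule G v w ∧ IsModule G (Wset G v w) := by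
  by_cases hadj : G.Adj v w
  · have hW : Wset G v w = {x | ∃ e, WedgeConnected G s(v, w) e ∧ x ∈ e} := by
      simp only [Wset, wedgeClass, if_pos hadj]
      rfl
    constructor
    · intro x hx
      rw [hW] at hx
      obtain ⟨e, he, hxe⟩ := hx
      exact Set.mem_sInter.2 fun M hM =>
        wc_subset_module hM.1 hM.2.1 hM.2.2 e he x hxe
    · rw [hW]
      exact isModule_W hadj
  · have hadj' : Gᶜ.Adj v w := ⟨hvw, hadj⟩
    have hW : Wset G v w = {x | ∃ e, WedgeConnected Gᶜ s(v, w) e ∧ x ∈ e} := by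
      simp only [Wset, wedgeClass, if_neg hadj]
      rfl
    constructor
    · intro x hx
      rw [hW] at hx
      obtain ⟨e, he, hxe⟩ := hx
      exact Set.mem_sInter.2 fun M hM =>
        wc_subset_module (isModule_compl hM.1) hM.2.1 hM.2.2 e he x hxe
    · have h2 := isModule_compl (isModule_W hadj')
      rwa [compl_compl, ← hW] at h2
end

section
/- Let G = (V,E) be a graph with |V| > 1 such that both G and its complement graph Ḡ are connected. Then the maximal proper modules of G form a partition of V. -/
/-- A maximal proper module of `G`: a module `M ⊊ V` that is not properly contained
in any other proper module. -/
def IsMaxProperModule {V : Type*} (G : SimpleGraph V) (M : Set V) : Prop :=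
  IsModule G M ∧ M ≠ Set.univ ∧
    ∀ M' : Set V, IsModule G M' → M' ≠ Set.univ → M ⊆ M' → M = M'

/-- `P` is a partition of the vertex set: a set of pairwise disjoint nonempty
subsets whose union is everything. -/
def IsPartition' {V : Type*} (P : Set (Set V)) : Prop :=
  (∀ B ∈ P, B.Nonempty) ∧ (∀ B ∈ P, ∀ B' ∈ P, B ≠ B' → B ∩ B' = ∅) ∧
    ⋃₀ P = Set.univ

/-!
Two overlapping proper modules `M`, `M'` have a module `M ∪ M'` as their union. If it were all
of `V`, then every vertex of `V \ M'` would see all of `M'` in the same way, so `V \ M'` would be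
cut off from its complement in `G` or in `Gᶜ`; hence the union is proper, and maximality forces
`M = M'`. Maximal proper modules cover `V` because singletons are proper modules and `V` is finite.
-/

open Set

namespace SimpleGraph

variable {V : Type*} {G : SimpleGraph V}

lemma Preconnected.exists_adj_of_mem_of_notMem (hG : G.Preconnected) {S : Set V} {u v : V}
    (hu : u ∈ S) (hv : v ∉ S) : ∃ x ∈ S, ∃ y ∉ S, G.Adj x y := by
  obtain ⟨p⟩ := hG u v
  obtain ⟨d, -, hd₁, hd₂⟩ := p.exists_boundary_dart S hu hv
  exact ⟨_, hd₁, _, hd₂, d.adj⟩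

lemma not_forall_adj_iff_of_preconnected (hG : G.Preconnected) (hGc : Gᶜ.Preconnected)
    {S : Set V} {a b : V} (ha : a ∈ S) (hb : b ∉ S) :
    ¬ ∀ x ∈ S, ∀ y ∉ S, (G.Adj x y ↔ G.Adj a b) := by
  intro hunif
  by_cases hab : G.Adj a b
  · obtain ⟨x, hx, y, hy, hxy⟩ := hGc.exists_adj_of_mem_of_notMem ha hb
    exact (compl_adj G x y).1 hxy |>.2 ((hunif x hx y hy).2 hab)
  · obtain ⟨x, hx, y, hy, hxy⟩ := hG.exists_adj_of_mem_of_notMem ha hb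
    exact hab ((hunif x hx y hy).1 hxy)

end SimpleGraph

section Modules

variable {V : Type*} {G : SimpleGraph V} {M M' : Set V}

lemma isModule_singleton (v : V) : IsModule G {v} :=
  ⟨singleton_nonempty v, fun _ _ w hw w' hw' => by
    rw [eq_of_mem_singleton hw, eq_of_mem_singleton hw']⟩

lemma IsModule.union (hM : IsModule G M) (hM' : IsModule G M') (h : (M ∩ M').Nonempty) :
    IsModule G (M ∪ M') := by
  obtain ⟨x, hxM, hxM'⟩ := h
  refine ⟨⟨x, Or.inl hxM⟩, fun v hv w hw w' hw' => ?_⟩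
  have hx : ∀ z ∈ M ∪ M', (G.Adj v z ↔ G.Adj v x) := by
    rintro z (hz | hz)
    · exact hM.2 v (fun h => hv (Or.inl h)) z hz x hxM
    · exact hM'.2 v (fun h => hv (Or.inr h)) z hz x hxM'
  rw [hx w hw, hx w' hw']

lemma IsModule.adj_iff_of_union_eq_univ (hM : IsModule G M) (hM' : IsModule G M')
    (hcover : M ∪ M' = univ) {a b x y : V} (ha : a ∉ M') (hb : b ∉ M) (hx : x ∉ M')
    (hy : y ∈ M') : G.Adj x y ↔ G.Adj a b := by
  have mem_of_notMem : ∀ {z}, z ∉ M' → z ∈ M := fun {z} hz =>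
    (hcover ▸ mem_univ z : z ∈ M ∪ M').resolve_right hz
  have hbM' : b ∈ M' := (hcover ▸ mem_univ b : b ∈ M ∪ M').resolve_left hb
  calc G.Adj x y ↔ G.Adj x b := hM'.2 x hx y hy b hbM'
    _ ↔ G.Adj b a := by rw [G.adj_comm, hM.2 b hb x (mem_of_notMem hx) a (mem_of_notMem ha)]
    _ ↔ G.Adj a b := G.adj_comm b a

lemma IsModule.union_ne_univ (hG : G.Preconnected) (hGc : Gᶜ.Preconnected)
    (hM : IsModule G M) (hM' : IsModule G M') (hMp : M ≠ univ) (hM'p : M' ≠ univ) :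
    M ∪ M' ≠ univ := by
  intro hcover
  obtain ⟨a, ha⟩ := (ne_univ_iff_exists_notMem M').1 hM'p
  obtain ⟨b, hb⟩ := (ne_univ_iff_exists_notMem M).1 hMp
  have hbM' : b ∈ M' := (hcover ▸ mem_univ b : b ∈ M ∪ M').resolve_left hb
  exact G.not_forall_adj_iff_of_preconnected hG hGc (S := M'ᶜ) ha (not_not.2 hbM')
    fun _ hx _ hy => hM.adj_iff_of_union_eq_univ hM' hcover ha hb hx (not_not.1 hy)

lemma isMaxProperModule_iff_maximal :
    IsMaxProperModule G M ↔ Maximal (fun N => IsModule G N ∧ N ≠ univ) M :=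
  ⟨fun ⟨hM, hMp, hmax⟩ =>
      ⟨⟨hM, hMp⟩, fun _ hN hMN => (hmax _ hN.1 hN.2 hMN).symm.subset⟩,
    fun h => ⟨h.prop.1, h.prop.2, fun _ hN hNp hMN => h.eq_of_subset ⟨hN, hNp⟩ hMN⟩⟩

lemma IsMaxProperModule.eq_of_inter_nonempty (hG : G.Preconnected) (hGc : Gᶜ.Preconnected)
    (hM : IsMaxProperModule G M) (hM' : IsMaxProperModule G M') (h : (M ∩ M').Nonempty) :
    M = M' := by
  have hunion := hM.1.union hM'.1 h
  have hproper := hM.1.union_ne_univ hG hGc hM'.1 hM.2.1 hM'.2.1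
  exact (hM.2.2 _ hunion hproper subset_union_left).trans
    (hM'.2.2 _ hunion hproper subset_union_right).symm

lemma exists_isMaxProperModule_mem [Finite V] [Nontrivial V] (v : V) :
    ∃ M, IsMaxProperModule G M ∧ v ∈ M := by
  obtain ⟨u, hu⟩ := exists_ne v
  have hsingleton : IsModule G {v} ∧ ({v} : Set V) ≠ univ :=
    ⟨isModule_singleton v, fun h => hu (eq_of_mem_singleton (h ▸ mem_univ u))⟩
  obtain ⟨M, hvM, hmax⟩ :=
    Finite.exists_le_maximal (p := fun N => IsModule G N ∧ N ≠ univ) hsingleton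
  exact ⟨M, isMaxProperModule_iff_maximal.2 hmax, singleton_subset_iff.1 hvM⟩

end Modules

/-- (Gallai) If `G` has more than one vertex and both `G` and its complement are
connected, then the maximal proper modules of `G` form a partition of the vertex set. -/
theorem maxProperModules_partition {V : Type*} [Fintype V]
    (G : SimpleGraph V) (hcard : 1 < Fintype.card V)
    (hG : G.Connected) (hGc : Gᶜ.Connected) :
    IsPartition' {M : Set V | IsMaxProperModule G M} := by
  refine ⟨fun M hM => hM.1.1, fun M hM M' hM' hne => ?_, ?_⟩
  · exact not_nonempty_iff_eq_empty.1 fun h =>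
      hne (hM.eq_of_inter_nonempty hG.preconnected hGc.preconnected hM' h)
  · have : Nontrivial V := Fintype.one_lt_card_iff_nontrivial.1 hcard
    refine eq_univ_of_forall fun v => ?_
    obtain ⟨M, hM, hvM⟩ := exists_isMaxProperModule_mem (G := G) v
    exact mem_sUnion_of_mem hvM hM
end

section
/- Let G = (V,E) be a graph such that both G and its complement graph Ḡ are connected, and let M', M'' be maximal proper modules of G with M' ≠ M''. Then for every v ∈ M' and every w ∈ M'' it holds that M_{v,w} = V. -/
lemma reach_stay {V : Type*} (G : SimpleGraph V) (S : Set V)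
    (h : ∀ a ∈ S, ∀ b ∉ S, ¬ G.Adj a b) {c x : V} (hr : G.Reachable c x) :
    c ∈ S → x ∈ S := by
  obtain ⟨p⟩ := hr
  induction p with
  | nil => exact id
  | cons hadj p ih => exact fun hu => ih (by_contra fun hv => h _ hu _ hv hadj)

lemma isModule_union {V : Type*} (G : SimpleGraph V) {M N : Set V}
    (hM : IsModule G M) (hN : IsModule G N) (hMN : (M ∩ N).Nonempty) :
    IsModule G (M ∪ N) := by
  obtain ⟨z, hzM, hzN⟩ := hMN
  refine ⟨hM.1.mono Set.subset_union_left, ?_⟩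
  intro v hv w hw w' hw'
  have hvM : v ∉ M := fun h => hv (Or.inl h)
  have hvN : v ∉ N := fun h => hv (Or.inr h)
  have key : ∀ u ∈ M ∪ N, (G.Adj v u ↔ G.Adj v z) := by
    rintro u (hu | hu)
    · exact hM.2 v hvM u hu z hzM
    · exact hN.2 v hvN u hu z hzN
  rw [key w hw, key w' hw']

lemma not_both_proper_cover {V : Type*} (G : SimpleGraph V)
    (hG : G.Connected) (hGc : Gᶜ.Connected) {M N : Set V}
    (hM : IsModule G M) (hN : IsModule G N)
    (hMu : M ≠ Set.univ) (hNu : N ≠ Set.univ)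
    (hcov : M ∪ N = Set.univ) (hint : (M ∩ N).Nonempty) : False := by
  obtain ⟨c, hcM, hcN⟩ := hint
  obtain ⟨a, haN⟩ : ∃ a, a ∉ N := by
    by_contra h; push_neg at h; exact hNu (Set.eq_univ_of_forall h)
  have haM : a ∈ M := by
    rcases (Set.eq_univ_iff_forall.mp hcov a) with h | h
    · exact h
    · exact absurd h haN
  obtain ⟨b, hbM⟩ : ∃ b, b ∉ M := by
    by_contra h; push_neg at h; exact hMu (Set.eq_univ_of_forall h)
  have hbN : b ∈ N := by
    rcases (Set.eq_univ_iff_forall.mp hcov b) with h | h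
    · exact absurd h hbM
    · exact h
  by_cases hac : G.Adj a c
  · -- a is adjacent to all of N
    have hA : ∀ n ∈ N, G.Adj a n := fun n hn => (hN.2 a haN n hn c hcN).mpr hac
    have hba : G.Adj b a := (hA b hbN).symm
    -- every vertex outside M is adjacent to all of M
    have hOutM : ∀ y ∉ M, ∀ m ∈ M, G.Adj y m := by
      intro y hy m hm
      have hyN : y ∈ N := by
        rcases (Set.eq_univ_iff_forall.mp hcov y) with h | h
        · exact absurd h hy
        · exact h
      exact (hM.2 y hy m hm a haM).mpr (hA y hyN).symm
    -- every vertex outside N is adjacent to all of N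
    have hOutN : ∀ x ∉ N, ∀ n ∈ N, G.Adj x n := by
      intro x hx n hn
      have hxM : x ∈ M := by
        rcases (Set.eq_univ_iff_forall.mp hcov x) with h | h
        · exact h
        · exact absurd h hx
      exact (hN.2 x hx n hn b hbN).mpr (hOutM b hbM x hxM).symm
    -- in the complement, M ∩ N is disconnected from the rest
    have hcross : ∀ u ∈ M ∩ N, ∀ t ∉ M ∩ N, ¬ (Gᶜ).Adj u t := by
      intro u hu t ht hadj
      rw [SimpleGraph.compl_adj] at hadj
      rcases Classical.em (t ∈ M) with h | h
      · have : t ∉ N := fun h' => ht ⟨h, h'⟩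
        exact hadj.2 (hOutN t this u hu.2).symm
      · exact hadj.2 (hOutM t h u hu.1).symm
    have : a ∈ M ∩ N :=
      reach_stay Gᶜ (M ∩ N) hcross (hGc.preconnected c a) ⟨hcM, hcN⟩
    exact haN this.2
  · -- a is adjacent to nothing in N
    have hA : ∀ n ∈ N, ¬ G.Adj a n := fun n hn h => hac ((hN.2 a haN n hn c hcN).mp h)
    have hbc : ¬ G.Adj b c := fun h => hA b hbN ((hM.2 b hbM c hcM a haM).mp h).symm
    have hOutM : ∀ y ∉ M, ∀ m ∈ M, ¬ G.Adj y m := by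
      intro y hy m hm h
      have hyN : y ∈ N := by
        rcases (Set.eq_univ_iff_forall.mp hcov y) with h' | h'
        · exact absurd h' hy
        · exact h'
      exact hA y hyN ((hM.2 y hy m hm a haM).mp h).symm
    have hOutN : ∀ x ∉ N, ∀ n ∈ N, ¬ G.Adj x n := by
      intro x hx n hn h
      have hxM : x ∈ M := by
        rcases (Set.eq_univ_iff_forall.mp hcov x) with h' | h'
        · exact h'
        · exact absurd h' hx
      exact hOutM b hbM x hxM ((hN.2 x hx n hn b hbN).mp h).symm
    have hcross : ∀ u ∈ M ∩ N, ∀ t ∉ M ∩ N, ¬ G.Adj u t := by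
      intro u hu t ht hadj
      rcases Classical.em (t ∈ M) with h | h
      · have : t ∉ N := fun h' => ht ⟨h, h'⟩
        exact hOutN t this u hu.2 hadj.symm
      · exact hOutM t h u hu.1 hadj.symm
    have : a ∈ M ∩ N :=
      reach_stay G (M ∩ N) hcross (hG.preconnected c a) ⟨hcM, hcN⟩
    exact haN this.2

/-- (Gallai) If `G` and its complement are connected and `M'`, `M''` are distinct
maximal proper modules of `G`, then for every `v ∈ M'` and `w ∈ M''` the smallest
module containing `v` and `w` is the whole vertex set. -/
theorem spanModule_eq_univ_of_distinct_maxProperModules {V : Type*} [Fintype V]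
    (G : SimpleGraph V) (hG : G.Connected) (hGc : Gᶜ.Connected)
    (M' M'' : Set V) (hM' : IsMaxProperModule G M') (hM'' : IsMaxProperModule G M'')
    (hne : M' ≠ M'') (v : V) (hv : v ∈ M') (w : V) (hw : w ∈ M'') :
    spanModule G v w = Set.univ := by
  rw [spanModule, Set.sInter_eq_univ]
  rintro N ⟨hNmod, hvN, hwN⟩
  by_contra hNu
  have key : ∀ M : Set V, IsMaxProperModule G M → ∀ u, u ∈ M → u ∈ N → N ⊆ M := by
    intro M hM u huM huN
    have hun := isModule_union G hM.1 hNmod ⟨u, huM, huN⟩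
    have hne' : M ∪ N ≠ Set.univ := fun h =>
      not_both_proper_cover G hG hGc hM.1 hNmod hM.2.1 hNu h ⟨u, huM, huN⟩
    have heq := hM.2.2 (M ∪ N) hun hne' Set.subset_union_left
    exact fun x hx => heq ▸ (Or.inr hx)
  have h1 : N ⊆ M' := key M' hM' v hv hvN
  have h2 : N ⊆ M'' := key M'' hM'' w hw hwN
  have hint : (M' ∩ M'').Nonempty := ⟨v, h1 hvN, h2 hvN⟩
  have hun := isModule_union G hM'.1 hM''.1 hint
  have hne' : M' ∪ M'' ≠ Set.univ := fun h =>
    not_both_proper_cover G hG hGc hM'.1 hM''.1 hM'.2.1 hM''.2.1 h hint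
  have e1 := hM'.2.2 (M' ∪ M'') hun hne' Set.subset_union_left
  have e2 := hM''.2.2 (M' ∪ M'') hun hne' Set.subset_union_right
  exact hne (e1.trans e2.symm)
end

section
/- Let G = (V,E) be a graph that is not connected, and let v and w be vertices lying in different connected components C_v and C_w of G. Then M_{v,w} = C_v ∪ C_w. -/
/-- The vertex set of the connected component of `G` containing `u`. -/
def componentSet {V : Type*} (G : SimpleGraph V) (u : V) : Set V :=
  {x | G.Reachable u x}

lemma module_walk_mem {V : Type*} {G : SimpleGraph V} {M : Set V}
    (hM : IsModule G M) {w : V} (hw : w ∈ M) :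
    ∀ {a c : V}, G.Walk a c → a ∈ M → ¬ G.Reachable a w → c ∈ M := by
  intro a c p
  induction p with
  | nil => exact fun h _ => h
  | @cons a b c hab p ih =>
    intro ha hr
    have hb : b ∈ M := by
      by_contra hb
      exact hr ((hab.reachable).trans ((hM.2 b hb a ha w hw).mp hab.symm).reachable)
    exact ih hb (fun h => hr (hab.reachable.trans h))

/-- (Gallai) If `G` is not connected and `v`, `w` lie in different connected
components `C_v`, `C_w`, then `M_{v,w} = C_v ∪ C_w`. -/
theorem spanModule_eq_union_components {V : Type*} [Fintype V] [Nonempty V]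
    (G : SimpleGraph V) (hnc : ¬ G.Connected)
    (v w : V) (hdiff : ¬ G.Reachable v w) :
    spanModule G v w = componentSet G v ∪ componentSet G w := by
  apply Set.Subset.antisymm
  · -- the union is itself a module containing v and w
    apply Set.sInter_subset_of_mem
    refine ⟨⟨⟨v, Or.inl (SimpleGraph.Reachable.refl v)⟩, ?_⟩,
      Or.inl (SimpleGraph.Reachable.refl v), Or.inr (SimpleGraph.Reachable.refl w)⟩
    intro z hz a ha b hb
    have key : ∀ c, c ∈ componentSet G v ∪ componentSet G w → ¬ G.Adj z c := by
      intro c hc hadj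
      apply hz
      rcases hc with hc | hc
      · exact Or.inl (hc.trans hadj.symm.reachable)
      · exact Or.inr (hc.trans hadj.symm.reachable)
    exact iff_of_false (key a ha) (key b hb)
  · intro x hx
    rw [spanModule, Set.mem_sInter]
    rintro M ⟨hM, hvM, hwM⟩
    rcases hx with hx | hx
    · obtain ⟨p⟩ := hx
      exact module_walk_mem hM hwM p hvM hdiff
    · obtain ⟨p⟩ := hx
      exact module_walk_mem hM hvM p hwM (fun h => hdiff h.symm)
end

section
/- Let G = (V,E) be a graph. For every v ∈ V, the binary relation ≺_v on V defined by w₁ ≺_v w₂ if and only if M_{v,w₂} ⊊ M_{v,w₁} is a strict weak order. -/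
/-- The relation `≺_v`: `w₁ ≺_v w₂` iff `M_{v,w₂} ⊊ M_{v,w₁}`. -/
def precMod {V : Type*} (G : SimpleGraph V) (v : V) (w₁ w₂ : V) : Prop :=
  spanModule G v w₂ ⊂ spanModule G v w₁

/-- Two elements are incomparable with respect to a relation `r`
if they are related in neither direction. -/
def Incomp {α : Type*} (r : α → α → Prop) (x y : α) : Prop := ¬ r x y ∧ ¬ r y x

/-- A strict weak order: an irreflexive transitive relation in which
incomparability is transitive. -/
def IsStrictWeakOrder' {α : Type*} (r : α → α → Prop) : Prop :=
  (∀ a, ¬ r a a) ∧ (∀ a b c, r a b → r b c → r a c) ∧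
    (∀ a b c, Incomp r a b → Incomp r b c → Incomp r a c)

/- ### Auxiliary lemmas -/

lemma isModule_univ {V : Type*} [Nonempty V] (G : SimpleGraph V) :
    IsModule G (Set.univ : Set V) :=
  ⟨Set.univ_nonempty, fun u hu => absurd (Set.mem_univ u) hu⟩

lemma mem_spanModule_left {V : Type*} (G : SimpleGraph V) (v w : V) :
    v ∈ spanModule G v w := by
  intro M hM; exact hM.2.1

lemma mem_spanModule_right {V : Type*} (G : SimpleGraph V) (v w : V) :
    w ∈ spanModule G v w := by
  intro M hM; exact hM.2.2

lemma spanModule_subset {V : Type*} {G : SimpleGraph V} {v w : V} {M : Set V}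
    (hM : IsModule G M) (hv : v ∈ M) (hw : w ∈ M) :
    spanModule G v w ⊆ M :=
  Set.sInter_subset_of_mem ⟨hM, hv, hw⟩

lemma isModule_spanModule {V : Type*} (G : SimpleGraph V) (v w : V) :
    IsModule G (spanModule G v w) := by
  refine ⟨⟨v, mem_spanModule_left G v w⟩, ?_⟩
  intro u hu x hx y hy
  rw [spanModule, Set.mem_sInter] at hu
  push_neg at hu
  obtain ⟨M, hM, huM⟩ := hu
  exact hM.1.2 u huM x (hx M hM) y (hy M hM)

/-- Difference of overlapping modules is a module. -/
lemma isModule_diff {V : Type*} {G : SimpleGraph V} {M N : Set V}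
    (hM : IsModule G M) (hN : IsModule G N)
    (hMN : (M \ N).Nonempty) (hNM : (N \ M).Nonempty) :
    IsModule G (N \ M) := by
  refine ⟨hNM, ?_⟩
  intro u hu w hw w' hw'
  by_cases huN : u ∈ N
  · have huM : u ∈ M := by by_contra h; exact hu ⟨huN, h⟩
    obtain ⟨y, hyM, hyN⟩ := hMN
    have key : ∀ z ∈ N \ M, (G.Adj u z ↔ G.Adj u y) := by
      intro z hz
      have h1 : G.Adj y u ↔ G.Adj y z := hN.2 y hyN u huN z hz.1
      have h2 : G.Adj z u ↔ G.Adj z y := hM.2 z hz.2 u huM y hyM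
      rw [G.adj_comm u z, h2, G.adj_comm z y, ← h1, G.adj_comm y u]
    rw [key w hw, key w' hw']
  · exact hN.2 u huN w hw.1 w' hw'.1

/-- Symmetric difference of overlapping incomparable modules is a module. -/
lemma isModule_symmDiff {V : Type*} {G : SimpleGraph V} {M N : Set V}
    (hM : IsModule G M) (hN : IsModule G N)
    (hint : (M ∩ N).Nonempty) (hMN : (M \ N).Nonempty) (hNM : (N \ M).Nonempty) :
    IsModule G ((M \ N) ∪ (N \ M)) := by
  obtain ⟨b0, hb0⟩ := hNM
  have hNM' : (N \ M).Nonempty := ⟨b0, hb0⟩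
  refine ⟨⟨b0, Or.inr hb0⟩, ?_⟩
  intro u hu w hw w' hw'
  by_cases huMN : u ∈ M ∪ N
  · -- then u ∈ M ∩ N
    have huM : u ∈ M := by
      rcases huMN with h | h
      · exact h
      · by_contra hm; exact hu (Or.inr ⟨h, hm⟩)
    have huN : u ∈ N := by
      by_contra hn; exact hu (Or.inl ⟨huM, hn⟩)
    have hdiff := isModule_diff hM hN hMN hNM'
    have key : ∀ z ∈ (M \ N) ∪ (N \ M), (G.Adj u z ↔ G.Adj u b0) := by
      intro z hz
      rcases hz with hz | hz
      · -- z ∈ M \ N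
        have h1 : G.Adj z u ↔ G.Adj z b0 := hN.2 z hz.2 u huN b0 hb0.1
        have h2 : G.Adj b0 u ↔ G.Adj b0 z := hM.2 b0 hb0.2 u huM z hz.1
        rw [G.adj_comm u z, h1, G.adj_comm z b0, ← h2, G.adj_comm b0 u]
      · exact hdiff.2 u (fun h => h.2 huM) z hz b0 hb0
    rw [key w hw, key w' hw']
  · obtain ⟨x0, hx0⟩ := hint
    have key : ∀ z ∈ (M \ N) ∪ (N \ M), (G.Adj u z ↔ G.Adj u x0) := by
      intro z hz
      rcases hz with hz | hz
      · exact hM.2 u (fun h => huMN (Or.inl h)) z hz.1 x0 hx0.1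
      · exact hN.2 u (fun h => huMN (Or.inr h)) z hz.1 x0 hx0.2
    rw [key w hw, key w' hw']

/-- If `x ∈ spanModule G v y`, then `spanModule G v x ⊆ spanModule G v y`. -/
lemma spanModule_mono {V : Type*} {G : SimpleGraph V} {v x y : V}
    (h : x ∈ spanModule G v y) :
    spanModule G v x ⊆ spanModule G v y :=
  spanModule_subset (isModule_spanModule G v y) (mem_spanModule_left G v y) h

/-- Key lemma: if `a` and `b` are incomparable, and `b` and `c` are incomparable,
then `spanModule G v a` is not a strict subset of `spanModule G v c`. -/
lemma precMod_key {V : Type*} [Nonempty V] (G : SimpleGraph V) (v a b c : V)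
    (hab : Incomp (precMod G v) a b) (hbc : Incomp (precMod G v) b c) :
    ¬ (spanModule G v a ⊂ spanModule G v c) := by
  intro hAC
  set A := spanModule G v a with hA
  set B := spanModule G v b with hB
  set C := spanModule G v c with hC
  -- translate incomparability
  have hab1 : ¬ (B ⊂ A) := hab.1
  have hab2 : ¬ (A ⊂ B) := hab.2
  have hbc1 : ¬ (C ⊂ B) := hbc.1
  have hbc2 : ¬ (B ⊂ C) := hbc.2
  have haA : a ∈ A := mem_spanModule_right G v a
  have hbB : b ∈ B := mem_spanModule_right G v b
  have hcC : c ∈ C := mem_spanModule_right G v c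
  have hvA : v ∈ A := mem_spanModule_left G v a
  have hvB : v ∈ B := mem_spanModule_left G v b
  have hvC : v ∈ C := mem_spanModule_left G v c
  -- membership facts
  have haB : a ∉ B := by
    intro h
    rcases (spanModule_mono h).ssubset_or_eq with hs | he
    · exact hab2 hs
    · exact hbc2 (by rw [hB, ← he, ← hA]; exact hAC)
  have hbC : b ∉ C := by
    intro h
    rcases (spanModule_mono h).ssubset_or_eq with hs | he
    · exact hbc2 hs
    · exact hab2 (by rw [hB, he, ← hC]; exact hAC)
  have hcA : c ∉ A := by
    intro h
    exact hAC.2 (spanModule_mono h)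
  have hcB : c ∉ B := by
    intro h
    rcases (spanModule_mono h).ssubset_or_eq with hs | he
    · exact hbc1 hs
    · exact hab2 (by rw [hB, ← he, ← hC]; exact hAC)
  have hbA : b ∉ A := by
    intro h
    rcases (spanModule_mono h).ssubset_or_eq with hs | he
    · exact hab1 hs
    · exact hbc2 (by rw [hB, he, ← hA]; exact hAC)
  -- the symmetric difference X = (A \ B) ∪ (B \ A) is a module
  have hX : IsModule G ((A \ B) ∪ (B \ A)) :=
    isModule_symmDiff (isModule_spanModule G v a) (isModule_spanModule G v b)
      ⟨v, hvA, hvB⟩ ⟨a, haA, haB⟩ ⟨b, hbB, hbA⟩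
  set X := (A \ B) ∪ (B \ A) with hXdef
  have haX : a ∈ X := Or.inl ⟨haA, haB⟩
  have haC : a ∈ C := hAC.1 haA
  have hbX : b ∈ X := Or.inr ⟨hbB, hbA⟩
  have hvX : v ∉ X := by
    rintro (⟨_, h⟩ | ⟨_, h⟩)
    · exact h hvB
    · exact h hvA
  have hcX : c ∉ X := by
    rintro (⟨h, _⟩ | ⟨h, _⟩)
    · exact hcA h
    · exact hcB h
  -- C \ X is a module containing v and c, hence C ⊆ C \ X; contradiction at a
  have hCX : IsModule G (C \ X) :=
    isModule_diff hX (isModule_spanModule G v c) ⟨b, hbX, hbC⟩ ⟨v, hvC, hvX⟩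
  have hsub : C ⊆ C \ X :=
    spanModule_subset hCX ⟨hvC, hvX⟩ ⟨hcC, hcX⟩
  exact (hsub haC).2 haX

/-- For every vertex `v` of a graph `G`, the relation `≺_v` defined by
`w₁ ≺_v w₂ ↔ M_{v,w₂} ⊊ M_{v,w₁}` is a strict weak order. -/
theorem precMod_isStrictWeakOrder {V : Type*} [Fintype V] [Nonempty V]
    (G : SimpleGraph V) (v : V) :
    IsStrictWeakOrder' (precMod G v) := by
  refine ⟨fun a h => ssubset_irrefl _ h, fun a b c h1 h2 => h2.trans h1, ?_⟩
  intro a b c hab hbc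
  exact ⟨precMod_key G v c b a ⟨hbc.2, hbc.1⟩ ⟨hab.2, hab.1⟩,
    precMod_key G v a b c hab hbc⟩
end

section
/- Let G = (V,E) be a permutation graph with realizer (<₁,<₂), and let w be the first (least) vertex of <₁. Then for all k ≥ 0 it holds that ◁_{1,k}^w ⊆ <₁ and ◁_{2,k}^w ⊆ <₂. -/
/-- A strict linear order: an irreflexive transitive relation in which any two
distinct elements are comparable. -/
def IsStrictLinearOrder {α : Type*} (r : α → α → Prop) : Prop :=
  (∀ a, ¬ r a a) ∧ (∀ a b c, r a b → r b c → r a c) ∧ (∀ a b, a ≠ b → r a b ∨ r b a)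

/-- The pair `(r₁, r₂)` of binary relations on the vertices is closed under the edge
relation of `G`: for all `u`, `v` and `i ∈ {1,2}`, if `u ◁ᵢ v` and `{u,v}` is an edge
then `v ◁_{3-i} u`, and if `u ◁ᵢ v` and `{u,v}` is not an edge then `u ◁_{3-i} v`. -/
def ClosedUnderE {V : Type*} (G : SimpleGraph V) (r₁ r₂ : V → V → Prop) : Prop :=
  (∀ u v, r₁ u v → G.Adj u v → r₂ v u) ∧
  (∀ u v, r₁ u v → ¬ G.Adj u v → r₂ u v) ∧
  (∀ u v, r₂ u v → G.Adj u v → r₁ v u) ∧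
  (∀ u v, r₂ u v → ¬ G.Adj u v → r₁ u v)

/-- `(r₁, r₂)` is a realizer of `G`: both are strict linear orders on the vertices and
two distinct vertices are adjacent iff they occur in different order in `r₁` and `r₂`. -/
def IsRealizer {V : Type*} (G : SimpleGraph V) (r₁ r₂ : V → V → Prop) : Prop :=
  IsStrictLinearOrder r₁ ∧ IsStrictLinearOrder r₂ ∧
    ∀ u v, u ≠ v → (G.Adj u v ↔ ((r₁ u v ∧ r₂ v u) ∨ (r₁ v u ∧ r₂ u v)))

/-- The first component `◁₁^E` of the closure of `(r, s)` under the edge relation: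
`r ∪ {(v,u) : u s v and {u,v} ∈ E} ∪ {(u,v) : u s v and {u,v} ∉ E}` (with the roles of
the two components swapped it also gives the second component). -/
def closE {V : Type*} (G : SimpleGraph V) (r s : V → V → Prop) : V → V → Prop :=
  fun a b => r a b ∨ (s b a ∧ G.Adj b a) ∨ (s a b ∧ ¬ G.Adj a b)

/-- The pair of relations `(◁_{1,k}^w, ◁_{2,k}^w)`:
`◁_{1,0}^w := {(w,v) : v ≠ w}`, `◁_{2,0}^w := ∅`, and
`(◁_{1,k+1}^w, ◁_{2,k+1}^w) := ((◁_{1,k}^w, ◁_{2,k}^w)^E)^T`, i.e. the transitive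
closure of each component of the closure under the edge relation. -/
def iterRel {V : Type*} (G : SimpleGraph V) (w : V) :
    ℕ → (V → V → Prop) × (V → V → Prop)
  | 0 => (fun a b => a = w ∧ b ≠ w, fun _ _ => False)
  | k + 1 =>
      (Relation.TransGen (closE G (iterRel G w k).1 (iterRel G w k).2),
       Relation.TransGen (closE G (iterRel G w k).2 (iterRel G w k).1))

/-- The stable value `◁₁^w` of the increasing chain `◁_{1,k}^w`, equivalently its union. -/
def limitRel₁ {V : Type*} (G : SimpleGraph V) (w : V) : V → V → Prop :=
  fun a b => ∃ k, (iterRel G w k).1 a b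

/-- The stable value `◁₂^w` of the increasing chain `◁_{2,k}^w`, equivalently its union. -/
def limitRel₂ {V : Type*} (G : SimpleGraph V) (w : V) : V → V → Prop :=
  fun a b => ∃ k, (iterRel G w k).2 a b


lemma closE_subset {V : Type*} (G : SimpleGraph V) (r₁ r₂ : V → V → Prop)
    (hreal : IsRealizer G r₁ r₂) (r s : V → V → Prop)
    (h1 : ∀ a b, r a b → r₁ a b) (h2 : ∀ a b, s a b → r₂ a b) :
    ∀ a b, closE G r s a b → r₁ a b := by
  obtain ⟨⟨irr1, tr1, tot1⟩, ⟨irr2, tr2, tot2⟩, hadj⟩ := hreal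
  intro a b h
  rcases h with h | ⟨hs, hadj'⟩ | ⟨hs, hnadj⟩
  · exact h1 _ _ h
  · have hne : b ≠ a := hadj'.ne
    have h2ba := h2 _ _ hs
    rcases (hadj b a hne).mp hadj' with ⟨_, hab⟩ | ⟨hba, _⟩
    · exact absurd (tr2 _ _ _ h2ba hab) (irr2 b)
    · exact hba
  · have h2ab := h2 _ _ hs
    have hne : a ≠ b := by rintro rfl; exact irr2 a h2ab
    rcases tot1 a b hne with h | h
    · exact h
    · exact absurd ((hadj a b hne).mpr (Or.inr ⟨h, h2ab⟩)) hnadj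

lemma isRealizer_swap {V : Type*} (G : SimpleGraph V) (r₁ r₂ : V → V → Prop)
    (hreal : IsRealizer G r₁ r₂) : IsRealizer G r₂ r₁ := by
  obtain ⟨h1, h2, hadj⟩ := hreal
  exact ⟨h2, h1, fun u v hne => (hadj u v hne).trans (by tauto)⟩

/-- Let `G` be a permutation graph with realizer `(<₁, <₂)` and let `w` be the least
vertex of `<₁`. Then for all `k ≥ 0`, `◁_{1,k}^w ⊆ <₁` and `◁_{2,k}^w ⊆ <₂`. -/
theorem iterRel_subset_realizer {V : Type*} [Fintype V] [Nonempty V]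
    (G : SimpleGraph V) (r₁ r₂ : V → V → Prop) (hreal : IsRealizer G r₁ r₂)
    (w : V) (hw : ∀ v, v ≠ w → r₁ w v) :
    ∀ k : ℕ, (∀ a b, (iterRel G w k).1 a b → r₁ a b) ∧
      (∀ a b, (iterRel G w k).2 a b → r₂ a b) := by
  intro k
  induction k with
  | zero =>
    refine ⟨fun a b ⟨ha, hb⟩ => ha ▸ hw b hb, fun a b h => h.elim⟩
  | succ n ih =>
    obtain ⟨ih1, ih2⟩ := ih
    have c1 := closE_subset G r₁ r₂ hreal _ _ ih1 ih2
    have c2 := closE_subset G r₂ r₁ (isRealizer_swap G r₁ r₂ hreal) _ _ ih2 ih1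
    obtain ⟨⟨_, tr1, _⟩, ⟨_, tr2, _⟩, _⟩ := hreal
    constructor
    · intro a b h
      induction h with
      | single h => exact c1 _ _ h
      | tail _ h ih => exact tr1 _ _ _ ih (c1 _ _ h)
    · intro a b h
      induction h with
      | single h => exact c2 _ _ h
      | tail _ h ih => exact tr2 _ _ _ ih (c2 _ _ h)
end

section
/- Let G = (V,E) be a prime permutation graph with realizer (<₁,<₂), and let w be the first (least) vertex of <₁. Then for all k ≥ 0, the relations ◁_{1,k}^w and ◁_{2,k}^w are strict weak orders on V. -/
/-- A graph is prime if all of its modules are trivial, i.e. singletons or the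
whole vertex set. -/
def IsPrime {V : Type*} (G : SimpleGraph V) : Prop :=
  ∀ M : Set V, IsModule G M → (∃ x, M = {x}) ∨ M = Set.univ

section IterRelAux

variable {V : Type*}

/-- Auxiliary invariant: `A` is contained in `r`, transitive, and has transitive
incomparability. -/
def GoodRel (r A : V → V → Prop) : Prop :=
  (∀ a b, A a b → r a b) ∧ (∀ a b c, A a b → A b c → A a c) ∧
    (∀ a b c, Incomp A a b → Incomp A b c → Incomp A a c)

lemma slo_asym {r : V → V → Prop} (h : IsStrictLinearOrder r) {a b : V} (hab : r a b) :
    ¬ r b a := fun hba => h.1 a (h.2.1 a b a hab hba)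

lemma goodRel_isStrictWeakOrder' {r A : V → V → Prop} (hr : IsStrictLinearOrder r)
    (h : GoodRel r A) : IsStrictWeakOrder' A :=
  ⟨fun a ha => hr.1 a (h.1 a a ha), h.2.1, h.2.2⟩

/-- Main abstract lemma: if `S` is exactly `r₁` restricted to pairs not related by a
symmetric transitive relation `Sm`, then the transitive closure of `S` satisfies the
invariant. -/
lemma transGen_goodRel {r₁ S Sm : V → V → Prop} (h1 : IsStrictLinearOrder r₁)
    (hsymm : ∀ a b, Sm a b → Sm b a)
    (htrans : ∀ a b c, Sm a b → Sm b c → Sm a c)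
    (hS : ∀ a b, S a b ↔ (r₁ a b ∧ ¬ Sm a b)) :
    GoodRel r₁ (Relation.TransGen S) := by
  have hsub : ∀ a b, Relation.TransGen S a b → r₁ a b := by
    intro a b h
    induction h with
    | single h => exact ((hS _ _).mp h).1
    | tail _ h ih => exact h1.2.1 _ _ _ ih ((hS _ _).mp h).1
  refine ⟨hsub, fun a b c hab hbc => hab.trans hbc, ?_⟩
  have hfor : ∀ a b, a ≠ b → Incomp (Relation.TransGen S) a b →
      Sm a b ∧ ∀ z, ((r₁ a z ∧ r₁ z b) ∨ (r₁ b z ∧ r₁ z a)) → Sm a z := by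
    intro a b hne hinc
    have hsame : Sm a b := by
      by_contra hns
      rcases h1.2.2 a b hne with h | h
      · exact hinc.1 (Relation.TransGen.single ((hS a b).mpr ⟨h, hns⟩))
      · exact hinc.2 (Relation.TransGen.single ((hS b a).mpr
          ⟨h, fun hs => hns (hsymm _ _ hs)⟩))
    refine ⟨hsame, fun z hz => ?_⟩
    by_contra hnsz
    rcases hz with ⟨haz, hzb⟩ | ⟨hbz, hza⟩
    · have s1 : S a z := (hS a z).mpr ⟨haz, hnsz⟩
      have s2 : S z b := (hS z b).mpr ⟨hzb, fun hs =>
        hnsz (htrans _ _ _ hsame (hsymm _ _ hs))⟩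
      exact hinc.1 (Relation.TransGen.head s1 (Relation.TransGen.single s2))
    · have s1 : S b z := (hS b z).mpr ⟨hbz, fun hs =>
        hnsz (htrans _ _ _ hsame hs)⟩
      have s2 : S z a := (hS z a).mpr ⟨hza, fun hs =>
        hnsz (hsymm _ _ hs)⟩
      exact hinc.2 (Relation.TransGen.head s1 (Relation.TransGen.single s2))
  have hback : ∀ a b, Sm a b →
      (∀ z, ((r₁ a z ∧ r₁ z b) ∨ (r₁ b z ∧ r₁ z a)) → Sm a z) →
      Incomp (Relation.TransGen S) a b := by
    intro a b hs hcond
    have hsubR : ∀ x y, Relation.ReflTransGen S x y → x = y ∨ r₁ x y := by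
      intro x y h
      induction h with
      | refl => exact Or.inl rfl
      | tail _ h ih =>
        rcases ih with rfl | ih
        · exact Or.inr ((hS _ _).mp h).1
        · exact Or.inr (h1.2.1 _ _ _ ih ((hS _ _).mp h).1)
    constructor
    · intro h
      obtain ⟨z, haz, hzb⟩ := Relation.TransGen.head'_iff.mp h
      have h' := (hS a z).mp haz
      rcases hsubR z b hzb with rfl | hr
      · exact h'.2 hs
      · exact h'.2 (hcond z (Or.inl ⟨h'.1, hr⟩))
    · intro h
      obtain ⟨z, hbz, hza⟩ := Relation.TransGen.head'_iff.mp h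
      have h' := (hS b z).mp hbz
      rcases hsubR z a hza with rfl | hr
      · exact h'.2 (hsymm _ _ hs)
      · exact h'.2 (htrans _ _ _ (hsymm _ _ hs) (hcond z (Or.inr ⟨h'.1, hr⟩)))
  intro a b c hab hbc
  by_cases hab' : a = b
  · exact hab' ▸ hbc
  by_cases hbc' : b = c
  · exact hbc' ▸ hab
  by_cases hac' : a = c
  · subst hac'
    exact ⟨fun h => h1.1 a (hsub a a h), fun h => h1.1 a (hsub a a h)⟩
  obtain ⟨hs1, hc1⟩ := hfor a b hab' hab
  obtain ⟨hs2, hc2⟩ := hfor b c hbc' hbc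
  refine hback a c (htrans _ _ _ hs1 hs2) ?_
  intro z hz
  by_cases hzb : z = b
  · exact hzb ▸ hs1
  rcases hz with ⟨haz, hzc⟩ | ⟨hcz, hza⟩
  · rcases h1.2.2 z b hzb with h | h
    · exact hc1 z (Or.inl ⟨haz, h⟩)
    · exact htrans _ _ _ hs1 (hc2 z (Or.inl ⟨h, hzc⟩))
  · rcases h1.2.2 z b hzb with h | h
    · exact htrans _ _ _ hs1 (hc2 z (Or.inr ⟨hcz, h⟩))
    · exact hc1 z (Or.inr ⟨h, hza⟩)

/-- The edge-closure `closE G A B` coincides with `r₁` restricted to pairs that are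
comparable in `A` or in `B`. -/
lemma closE_iff {G : SimpleGraph V} {r₁ r₂ : V → V → Prop}
    (h1 : IsStrictLinearOrder r₁) (h2 : IsStrictLinearOrder r₂)
    (hadj : ∀ u v, u ≠ v → (G.Adj u v ↔ ((r₁ u v ∧ r₂ v u) ∨ (r₁ v u ∧ r₂ u v))))
    {A B : V → V → Prop} (hA : ∀ a b, A a b → r₁ a b) (hB : ∀ a b, B a b → r₂ a b) :
    ∀ a b, closE G A B a b ↔ (r₁ a b ∧ ¬ (Incomp A a b ∧ Incomp B a b)) := by
  intro a b
  constructor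
  · rintro (hab | ⟨hba, hadjba⟩ | ⟨hab, hnadj⟩)
    · exact ⟨hA a b hab, fun hs => hs.1.1 hab⟩
    · have hr2 : r₂ b a := hB b a hba
      have hne : a ≠ b := fun h => h2.1 b (h ▸ hr2)
      rcases (hadj a b hne).mp hadjba.symm with ⟨h₁, _⟩ | ⟨_, hr2'⟩
      · exact ⟨h₁, fun hs => hs.2.2 hba⟩
      · exact absurd hr2' (slo_asym h2 hr2)
    · have hr2 : r₂ a b := hB a b hab
      have hne : a ≠ b := fun h => h2.1 a (h ▸ hr2)
      have hr1 : r₁ a b := by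
        rcases h1.2.2 a b hne with h | h
        · exact h
        · exact absurd ((hadj a b hne).mpr (Or.inr ⟨h, hr2⟩)) hnadj
      exact ⟨hr1, fun hs => hs.2.1 hab⟩
  · rintro ⟨hr1, hns⟩
    have hne : a ≠ b := fun h => h1.1 a (h ▸ hr1)
    by_cases hAab : A a b
    · exact Or.inl hAab
    by_cases hAba : A b a
    · exact absurd (hA b a hAba) (slo_asym h1 hr1)
    by_cases hBab : B a b
    · refine Or.inr (Or.inr ⟨hBab, fun hadjab => ?_⟩)
      rcases (hadj a b hne).mp hadjab with ⟨_, hr2ba⟩ | ⟨hr1ba, _⟩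
      · exact slo_asym h2 (hB a b hBab) hr2ba
      · exact slo_asym h1 hr1 hr1ba
    by_cases hBba : B b a
    · have hAdj : G.Adj a b := (hadj a b hne).mpr (Or.inl ⟨hr1, hB b a hBba⟩)
      exact Or.inr (Or.inl ⟨hBba, hAdj.symm⟩)
    · exact absurd ⟨⟨hAab, hAba⟩, ⟨hBab, hBba⟩⟩ hns

/-- One step of the iteration preserves the invariant on the first component. -/
lemma step_goodRel {G : SimpleGraph V} {r₁ r₂ : V → V → Prop}
    (h1 : IsStrictLinearOrder r₁) (h2 : IsStrictLinearOrder r₂)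
    (hadj : ∀ u v, u ≠ v → (G.Adj u v ↔ ((r₁ u v ∧ r₂ v u) ∨ (r₁ v u ∧ r₂ u v))))
    {A B : V → V → Prop} (hA : GoodRel r₁ A) (hB : GoodRel r₂ B) :
    GoodRel r₁ (Relation.TransGen (closE G A B)) := by
  refine transGen_goodRel (Sm := fun a b => Incomp A a b ∧ Incomp B a b) h1 ?_ ?_ ?_
  · exact fun a b h => ⟨⟨h.1.2, h.1.1⟩, ⟨h.2.2, h.2.1⟩⟩
  · exact fun a b c hab hbc => ⟨hA.2.2 a b c hab.1 hbc.1, hB.2.2 a b c hab.2 hbc.2⟩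
  · exact closE_iff h1 h2 hadj hA.1 hB.1

end IterRelAux

/-- Let `G` be a prime permutation graph with realizer `(<₁, <₂)` and let `w` be the
least vertex of `<₁`. Then for all `k ≥ 0`, the relations `◁_{1,k}^w` and `◁_{2,k}^w`
are strict weak orders on the vertex set. -/
theorem iterRel_isStrictWeakOrder {V : Type*} [Fintype V] [Nonempty V]
    (G : SimpleGraph V) (hprime : IsPrime G)
    (r₁ r₂ : V → V → Prop) (hreal : IsRealizer G r₁ r₂)
    (w : V) (hw : ∀ v, v ≠ w → r₁ w v) :
    ∀ k : ℕ, IsStrictWeakOrder' (iterRel G w k).1 ∧ IsStrictWeakOrder' (iterRel G w k).2 := by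
  obtain ⟨h1, h2, hadj⟩ := hreal
  have hadj' : ∀ u v, u ≠ v → (G.Adj u v ↔ ((r₂ u v ∧ r₁ v u) ∨ (r₂ v u ∧ r₁ u v))) := by
    intro u v huv
    rw [hadj u v huv]
    tauto
  have key : ∀ k : ℕ, GoodRel r₁ (iterRel G w k).1 ∧ GoodRel r₂ (iterRel G w k).2 := by
    intro k
    induction k with
    | zero =>
      have hiff : ∀ a b : V, Incomp (fun a b : V => a = w ∧ b ≠ w) a b ↔ (a = w ↔ b = w) := by
        intro a b
        unfold Incomp
        simp only [ne_eq]
        tauto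
      constructor
      · refine ⟨?_, ?_, ?_⟩
        · rintro a b ⟨rfl, hb⟩
          exact hw b hb
        · rintro a b c ⟨rfl, hb⟩ ⟨hbw, _⟩
          exact absurd hbw hb
        · intro a b c hab hbc
          exact (hiff a c).mpr (((hiff a b).mp hab).trans ((hiff b c).mp hbc))
      · exact ⟨fun a b h => h.elim, fun a b c h => h.elim,
          fun a b c _ _ => ⟨fun h => h, fun h => h⟩⟩
    | succ k ih =>
      exact ⟨step_goodRel h1 h2 hadj ih.1 ih.2, step_goodRel h2 h1 hadj' ih.2 ih.1⟩
  intro k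
  exact ⟨goodRel_isStrictWeakOrder' h1 (key k).1, goodRel_isStrictWeakOrder' h2 (key k).2⟩
end

section
/- Let G = (V,E) be a prime permutation graph with realizer (<₁,<₂), and let w be the first (least) vertex of <₁. Then the relations ◁₁^w and ◁₂^w are strict linear orders on V. -/
/-- Let `G` be a prime permutation graph with realizer `(<₁, <₂)` and let `w` be the
least vertex of `<₁`. Then the relations `◁₁^w` and `◁₂^w` are strict linear orders
on the vertex set. -/
theorem limitRel_isStrictLinearOrder {V : Type*} [Fintype V] [Nonempty V]
    (G : SimpleGraph V) (hprime : IsPrime G)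
    (r₁ r₂ : V → V → Prop) (hreal : IsRealizer G r₁ r₂)
    (w : V) (hw : ∀ v, v ≠ w → r₁ w v) :
    IsStrictLinearOrder (limitRel₁ G w) ∧ IsStrictLinearOrder (limitRel₂ G w) := by
  classical
  obtain ⟨⟨hirr1, htrans1, htot1⟩, ⟨hirr2, htrans2, htot2⟩, hadj⟩ := hreal
  have hasym1 : ∀ a b, r₁ a b → ¬ r₁ b a := fun a b h h' => hirr1 a (htrans1 _ _ _ h h')
  have hasym2 : ∀ a b, r₂ a b → ¬ r₂ b a := fun a b h h' => hirr2 a (htrans2 _ _ _ h h')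
  -- monotonicity of the chain
  have hmono : ∀ k m, k ≤ m →
      (∀ a b, (iterRel G w k).1 a b → (iterRel G w m).1 a b) ∧
      (∀ a b, (iterRel G w k).2 a b → (iterRel G w m).2 a b) := by
    intro k m hkm
    induction m with
    | zero =>
      have : k = 0 := Nat.le_zero.mp hkm
      subst this; exact ⟨fun _ _ => id, fun _ _ => id⟩
    | succ m ih =>
      rcases Nat.lt_or_ge k (m+1) with h | h
      · have hle := ih (Nat.lt_succ_iff.mp h)
        refine ⟨fun a b hab => ?_, fun a b hab => ?_⟩
        · exact Relation.TransGen.single (Or.inl (hle.1 a b hab))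
        · exact Relation.TransGen.single (Or.inl (hle.2 a b hab))
      · have : k = m+1 := le_antisymm hkm h
        subst this; exact ⟨fun _ _ => id, fun _ _ => id⟩
  -- containment in the realizer
  have hsub : ∀ k, (∀ a b, (iterRel G w k).1 a b → r₁ a b) ∧
      (∀ a b, (iterRel G w k).2 a b → r₂ a b) := by
    intro k
    induction k with
    | zero =>
      constructor
      · intro a b h
        have h' : a = w ∧ b ≠ w := h
        obtain ⟨rfl, hb⟩ := h'
        exact hw b hb
      · intro a b h
        exact (h : False).elim
    | succ k ih =>
      obtain ⟨ih1, ih2⟩ := ih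
      have step1 : ∀ a b, closE G (iterRel G w k).1 (iterRel G w k).2 a b → r₁ a b := by
        intro a b h
        have h' : (iterRel G w k).1 a b ∨ ((iterRel G w k).2 b a ∧ G.Adj b a) ∨
            ((iterRel G w k).2 a b ∧ ¬ G.Adj a b) := h
        rcases h' with h | ⟨h, hab⟩ | ⟨h, hnab⟩
        · exact ih1 a b h
        · have hba := ih2 b a h
          have hne : b ≠ a := fun e => hirr2 a (e ▸ hba)
          rcases (hadj b a hne).mp hab with ⟨h1, h2⟩ | ⟨h1, h2⟩
          · exact absurd h2 (hasym2 _ _ hba)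
          · exact h1
        · have hba := ih2 a b h
          have hne : a ≠ b := fun e => hirr2 a (e ▸ hba)
          rcases htot1 a b hne with h1 | h1
          · exact h1
          · exact absurd ((hadj a b hne).mpr (Or.inr ⟨h1, hba⟩)) hnab
      have step2 : ∀ a b, closE G (iterRel G w k).2 (iterRel G w k).1 a b → r₂ a b := by
        intro a b h
        have h' : (iterRel G w k).2 a b ∨ ((iterRel G w k).1 b a ∧ G.Adj b a) ∨
            ((iterRel G w k).1 a b ∧ ¬ G.Adj a b) := h
        rcases h' with h | ⟨h, hab⟩ | ⟨h, hnab⟩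
        · exact ih2 a b h
        · have hba := ih1 b a h
          have hne : b ≠ a := fun e => hirr1 a (e ▸ hba)
          rcases (hadj b a hne).mp hab with ⟨h1, h2⟩ | ⟨h1, h2⟩
          · exact h2
          · exact absurd h1 (hasym1 _ _ hba)
        · have hba := ih1 a b h
          have hne : a ≠ b := fun e => hirr1 a (e ▸ hba)
          rcases htot2 a b hne with h1 | h1
          · exact h1
          · exact absurd ((hadj a b hne).mpr (Or.inl ⟨hba, h1⟩)) hnab
      constructor
      · intro a b h
        have h' : Relation.TransGen (closE G (iterRel G w k).1 (iterRel G w k).2) a b := h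
        clear h
        induction h' with
        | single h => exact step1 _ _ h
        | tail h1 h2 ih' => exact htrans1 _ _ _ ih' (step1 _ _ h2)
      · intro a b h
        have h' : Relation.TransGen (closE G (iterRel G w k).2 (iterRel G w k).1) a b := h
        clear h
        induction h' with
        | single h => exact step2 _ _ h
        | tail h1 h2 ih' => exact htrans2 _ _ _ ih' (step2 _ _ h2)
  have hsubL1 : ∀ a b, limitRel₁ G w a b → r₁ a b := by
    intro a b h
    have h' : ∃ k, (iterRel G w k).1 a b := h
    obtain ⟨k, hk⟩ := h'
    exact (hsub k).1 a b hk
  have hsubL2 : ∀ a b, limitRel₂ G w a b → r₂ a b := by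
    intro a b h
    have h' : ∃ k, (iterRel G w k).2 a b := h
    obtain ⟨k, hk⟩ := h'
    exact (hsub k).2 a b hk
  have hirrL1 : ∀ a, ¬ limitRel₁ G w a a := fun a h => hirr1 a (hsubL1 a a h)
  have hirrL2 : ∀ a, ¬ limitRel₂ G w a a := fun a h => hirr2 a (hsubL2 a a h)
  -- transitivity of the limits
  have htransL1 : ∀ a b c, limitRel₁ G w a b → limitRel₁ G w b c → limitRel₁ G w a c := by
    intro a b c h1 h2
    have h1' : ∃ k, (iterRel G w k).1 a b := h1
    have h2' : ∃ k, (iterRel G w k).1 b c := h2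
    obtain ⟨k, hk⟩ := h1'; obtain ⟨l, hl⟩ := h2'
    have ha : Relation.TransGen (closE G (iterRel G w (max k l)).1 (iterRel G w (max k l)).2) a b :=
      Relation.TransGen.single (Or.inl ((hmono k (max k l) (le_max_left _ _)).1 _ _ hk))
    have hb : Relation.TransGen (closE G (iterRel G w (max k l)).1 (iterRel G w (max k l)).2) b c :=
      Relation.TransGen.single (Or.inl ((hmono l (max k l) (le_max_right _ _)).1 _ _ hl))
    exact ⟨max k l + 1, ha.trans hb⟩
  have htransL2 : ∀ a b c, limitRel₂ G w a b → limitRel₂ G w b c → limitRel₂ G w a c := by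
    intro a b c h1 h2
    have h1' : ∃ k, (iterRel G w k).2 a b := h1
    have h2' : ∃ k, (iterRel G w k).2 b c := h2
    obtain ⟨k, hk⟩ := h1'; obtain ⟨l, hl⟩ := h2'
    have ha : Relation.TransGen (closE G (iterRel G w (max k l)).2 (iterRel G w (max k l)).1) a b :=
      Relation.TransGen.single (Or.inl ((hmono k (max k l) (le_max_left _ _)).2 _ _ hk))
    have hb : Relation.TransGen (closE G (iterRel G w (max k l)).2 (iterRel G w (max k l)).1) b c :=
      Relation.TransGen.single (Or.inl ((hmono l (max k l) (le_max_right _ _)).2 _ _ hl))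
    exact ⟨max k l + 1, ha.trans hb⟩
  -- closure of the limits under the edge relation
  have hc1 : ∀ u v, limitRel₁ G w u v → G.Adj u v → limitRel₂ G w v u := by
    intro u v h ha
    have h' : ∃ k, (iterRel G w k).1 u v := h
    obtain ⟨k, hk⟩ := h'
    exact ⟨k+1, Relation.TransGen.single (Or.inr (Or.inl ⟨hk, ha⟩))⟩
  have hc2 : ∀ u v, limitRel₁ G w u v → ¬ G.Adj u v → limitRel₂ G w u v := by
    intro u v h ha
    have h' : ∃ k, (iterRel G w k).1 u v := h
    obtain ⟨k, hk⟩ := h'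
    exact ⟨k+1, Relation.TransGen.single (Or.inr (Or.inr ⟨hk, ha⟩))⟩
  have hc3 : ∀ u v, limitRel₂ G w u v → G.Adj u v → limitRel₁ G w v u := by
    intro u v h ha
    have h' : ∃ k, (iterRel G w k).2 u v := h
    obtain ⟨k, hk⟩ := h'
    exact ⟨k+1, Relation.TransGen.single (Or.inr (Or.inl ⟨hk, ha⟩))⟩
  have hc4 : ∀ u v, limitRel₂ G w u v → ¬ G.Adj u v → limitRel₁ G w u v := by
    intro u v h ha
    have h' : ∃ k, (iterRel G w k).2 u v := h
    obtain ⟨k, hk⟩ := h'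
    exact ⟨k+1, Relation.TransGen.single (Or.inr (Or.inr ⟨hk, ha⟩))⟩
  have hDL2 : ∀ u v, limitRel₂ G w u v → (limitRel₁ G w u v ∨ limitRel₁ G w v u) := by
    intro u v h
    by_cases ha : G.Adj u v
    · exact Or.inr (hc3 u v h ha)
    · exact Or.inl (hc4 u v h ha)
  -- the key exchange lemma
  have hkey : ∀ x z b', (limitRel₁ G w x z ∨ limitRel₁ G w z x) →
      (limitRel₁ G w x b' ∨ limitRel₁ G w b' x) →
      ¬ (limitRel₁ G w z b' ∨ limitRel₁ G w b' z) →
      (G.Adj x z ↔ G.Adj x b') := by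
    intro x z b' hxz hxb hzb
    have hnz2 : ¬ limitRel₂ G w z b' := fun h => hzb (hDL2 _ _ h)
    have hnz2' : ¬ limitRel₂ G w b' z := fun h => hzb ((hDL2 _ _ h).symm)
    have cxz : (G.Adj x z ∧ (limitRel₁ G w x z ∧ limitRel₂ G w z x ∨
          limitRel₁ G w z x ∧ limitRel₂ G w x z)) ∨
        (¬ G.Adj x z ∧ (limitRel₁ G w x z ∧ limitRel₂ G w x z ∨
          limitRel₁ G w z x ∧ limitRel₂ G w z x)) := by
      by_cases ha : G.Adj x z
      · rcases hxz with h | h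
        · exact Or.inl ⟨ha, Or.inl ⟨h, hc1 _ _ h ha⟩⟩
        · exact Or.inl ⟨ha, Or.inr ⟨h, hc1 _ _ h ha.symm⟩⟩
      · rcases hxz with h | h
        · exact Or.inr ⟨ha, Or.inl ⟨h, hc2 _ _ h ha⟩⟩
        · exact Or.inr ⟨ha, Or.inr ⟨h, hc2 _ _ h (fun h' => ha h'.symm)⟩⟩
    have cxb : (G.Adj x b' ∧ (limitRel₁ G w x b' ∧ limitRel₂ G w b' x ∨
          limitRel₁ G w b' x ∧ limitRel₂ G w x b')) ∨
        (¬ G.Adj x b' ∧ (limitRel₁ G w x b' ∧ limitRel₂ G w x b' ∨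
          limitRel₁ G w b' x ∧ limitRel₂ G w b' x)) := by
      by_cases ha : G.Adj x b'
      · rcases hxb with h | h
        · exact Or.inl ⟨ha, Or.inl ⟨h, hc1 _ _ h ha⟩⟩
        · exact Or.inl ⟨ha, Or.inr ⟨h, hc1 _ _ h ha.symm⟩⟩
      · rcases hxb with h | h
        · exact Or.inr ⟨ha, Or.inl ⟨h, hc2 _ _ h ha⟩⟩
        · exact Or.inr ⟨ha, Or.inr ⟨h, hc2 _ _ h (fun h' => ha h'.symm)⟩⟩
    rcases cxz with ⟨ha1, hq1⟩ | ⟨ha1, hq1⟩ <;> rcases cxb with ⟨ha2, hq2⟩ | ⟨ha2, hq2⟩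
    · exact iff_of_true ha1 ha2
    · exfalso
      rcases hq1 with ⟨h1, h2⟩ | ⟨h1, h2⟩ <;> rcases hq2 with ⟨h3, h4⟩ | ⟨h3, h4⟩
      · exact hnz2 (htransL2 _ _ _ h2 h4)
      · exact hzb (Or.inr (htransL1 _ _ _ h3 h1))
      · exact hzb (Or.inl (htransL1 _ _ _ h1 h3))
      · exact hnz2' (htransL2 _ _ _ h4 h2)
    · exfalso
      rcases hq1 with ⟨h1, h2⟩ | ⟨h1, h2⟩ <;> rcases hq2 with ⟨h3, h4⟩ | ⟨h3, h4⟩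
      · exact hnz2' (htransL2 _ _ _ h4 h2)
      · exact hzb (Or.inr (htransL1 _ _ _ h3 h1))
      · exact hzb (Or.inl (htransL1 _ _ _ h1 h3))
      · exact hnz2 (htransL2 _ _ _ h2 h4)
    · exact iff_of_false ha1 ha2
  have hwD : ∀ v, v ≠ w → limitRel₁ G w w v := fun v hv => ⟨0, ⟨rfl, hv⟩⟩
  -- totality via primality
  have hDtotal : ∀ a b, a ≠ b → (limitRel₁ G w a b ∨ limitRel₁ G w b a) := by
    by_contra hcon
    push_neg at hcon
    obtain ⟨a, b, hne, hnab, hnba⟩ := hcon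
    set U : V → V → Prop :=
      fun y z => y ≠ z ∧ ¬ (limitRel₁ G w y z ∨ limitRel₁ G w z y) with hUdef
    have hbM : Relation.ReflTransGen U b b := Relation.ReflTransGen.refl
    have haM : Relation.ReflTransGen U b a :=
      Relation.ReflTransGen.single ⟨hne.symm, fun h => h.elim (fun h1 => hnba h1)
        (fun h1 => hnab h1)⟩
    have hwM : ¬ Relation.ReflTransGen U b w := by
      intro hwm
      rcases Relation.ReflTransGen.cases_tail hwm with h | ⟨c, _, hc⟩
      · apply hnba
        rw [← h]
        exact hwD a (fun e => hne (e.trans h))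
      · exact hc.2 (Or.inr (hwD c hc.1))
    have hmod : IsModule G {z | Relation.ReflTransGen U b z} := by
      refine ⟨⟨b, hbM⟩, ?_⟩
      intro x hx z hz z' hz'
      have hDx : ∀ m, Relation.ReflTransGen U b m →
          (limitRel₁ G w x m ∨ limitRel₁ G w m x) := by
        intro m hm
        by_contra hD
        exact hx (hm.tail ⟨fun e => hx (e ▸ hm), fun h' => hD h'.symm⟩)
      have key : ∀ y, Relation.ReflTransGen U b y → (G.Adj x y ↔ G.Adj x b) := by
        intro y hy
        induction hy with
        | refl => exact Iff.rfl
        | @tail p q hp hpq ih =>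
          have h1 := hDx p hp
          have h2 := hDx q (hp.tail hpq)
          exact (hkey x q p h2 h1 (fun hd => hpq.2 hd.symm)).trans ih
      exact (key z hz).trans (key z' hz').symm
    rcases hprime _ hmod with ⟨x, hxeq⟩ | huniv
    · have hb : b ∈ ({x} : Set V) := hxeq ▸ hbM
      have ha : a ∈ ({x} : Set V) := hxeq ▸ haM
      exact hne (Set.mem_singleton_iff.mp ha |>.trans (Set.mem_singleton_iff.mp hb).symm)
    · exact hwM (Set.eq_univ_iff_forall.mp huniv w)
  have htotL1 : ∀ a b, a ≠ b → limitRel₁ G w a b ∨ limitRel₁ G w b a := hDtotal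
  have htotL2 : ∀ a b, a ≠ b → limitRel₂ G w a b ∨ limitRel₂ G w b a := by
    intro a b hne
    rcases hDtotal a b hne with h | h
    · by_cases ha : G.Adj a b
      · exact Or.inr (hc1 _ _ h ha)
      · exact Or.inl (hc2 _ _ h ha)
    · by_cases ha : G.Adj b a
      · exact Or.inl (hc1 _ _ h ha)
      · exact Or.inr (hc2 _ _ h ha)
  exact ⟨⟨hirrL1, htransL1, htotL1⟩, ⟨hirrL2, htransL2, htotL2⟩⟩
end

section
/- Let G = (V,E) be a prime permutation graph with realizer (<₁,<₂), and let w be the first (least) vertex of <₁. Then ◁₁^w = <₁ and ◁₂^w = <₂. In particular, a realizer of a prime permutation graph is uniquely determined by the least element of its first linear order: if (<₁,<₂) and (<₁',<₂') are realizers of G whose first orders have the same least element, then <₁ = <₁' and <₂ = <₂'. -/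
section PrimePermAux
variable {V : Type*} {G : SimpleGraph V} {w : V}

private lemma pp_iter_mono₁ {k l : ℕ} (hkl : k ≤ l) {a b : V} (h : (iterRel G w k).1 a b) :
    (iterRel G w l).1 a b := by
  induction hkl with
  | refl => exact h
  | step _ ih => exact Relation.TransGen.single (Or.inl ih)

private lemma pp_iter_mono₂ {k l : ℕ} (hkl : k ≤ l) {a b : V} (h : (iterRel G w k).2 a b) :
    (iterRel G w l).2 a b := by
  induction hkl with
  | refl => exact h
  | step _ ih => exact Relation.TransGen.single (Or.inl ih)

private lemma pp_limit₁_base {v : V} (h : v ≠ w) : limitRel₁ G w w v := ⟨0, rfl, h⟩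

private lemma pp_limit₁_trans {a b c : V} (h1 : limitRel₁ G w a b) (h2 : limitRel₁ G w b c) :
    limitRel₁ G w a c := by
  obtain ⟨k, hk⟩ := h1; obtain ⟨l, hl⟩ := h2
  exact ⟨max k l + 1,
    Relation.TransGen.trans
      (Relation.TransGen.single (Or.inl (pp_iter_mono₁ (le_max_left k l) hk)))
      (Relation.TransGen.single (Or.inl (pp_iter_mono₁ (le_max_right k l) hl)))⟩

private lemma pp_limit₂_trans {a b c : V} (h1 : limitRel₂ G w a b) (h2 : limitRel₂ G w b c) :
    limitRel₂ G w a c := by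
  obtain ⟨k, hk⟩ := h1; obtain ⟨l, hl⟩ := h2
  exact ⟨max k l + 1,
    Relation.TransGen.trans
      (Relation.TransGen.single (Or.inl (pp_iter_mono₂ (le_max_left k l) hk)))
      (Relation.TransGen.single (Or.inl (pp_iter_mono₂ (le_max_right k l) hl)))⟩

private lemma pp_limit₁_adj {a b : V} (h : limitRel₁ G w a b) (hadj : G.Adj a b) :
    limitRel₂ G w b a := by
  obtain ⟨k, hk⟩ := h
  exact ⟨k + 1, Relation.TransGen.single (Or.inr (Or.inl ⟨hk, hadj⟩))⟩

private lemma pp_limit₁_nadj {a b : V} (h : limitRel₁ G w a b) (hnadj : ¬ G.Adj a b) :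
    limitRel₂ G w a b := by
  obtain ⟨k, hk⟩ := h
  exact ⟨k + 1, Relation.TransGen.single (Or.inr (Or.inr ⟨hk, hnadj⟩))⟩

private lemma pp_limit₂_adj {a b : V} (h : limitRel₂ G w a b) (hadj : G.Adj a b) :
    limitRel₁ G w b a := by
  obtain ⟨k, hk⟩ := h
  exact ⟨k + 1, Relation.TransGen.single (Or.inr (Or.inl ⟨hk, hadj⟩))⟩

private lemma pp_limit₂_nadj {a b : V} (h : limitRel₂ G w a b) (hnadj : ¬ G.Adj a b) :
    limitRel₁ G w a b := by
  obtain ⟨k, hk⟩ := h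
  exact ⟨k + 1, Relation.TransGen.single (Or.inr (Or.inr ⟨hk, hnadj⟩))⟩

private lemma pp_limit₂_comp {a b : V} (h : limitRel₂ G w a b) :
    limitRel₁ G w a b ∨ limitRel₁ G w b a := by
  by_cases hadj : G.Adj a b
  · exact Or.inr (pp_limit₂_adj h hadj)
  · exact Or.inl (pp_limit₂_nadj h hadj)

/-- Totality of `◁₁^w` on a prime graph: via primeness, no two vertices
are incomparable. -/
private lemma pp_total (hprime : IsPrime G) :
    ∀ x y : V, x ≠ y → limitRel₁ G w x y ∨ limitRel₁ G w y x := by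
  by_contra hc
  push_neg at hc
  obtain ⟨x, y, hxy, hn1, hn2⟩ := hc
  set J : V → V → Prop :=
    fun a b => a ≠ b ∧ ¬ limitRel₁ G w a b ∧ ¬ limitRel₁ G w b a with hJdef
  set M : Set V := {z | Relation.ReflTransGen J x z} with hMdef
  have hJsymm : ∀ a b, J a b → J b a := fun a b h => ⟨h.1.symm, h.2.2, h.2.1⟩
  have hxM : x ∈ M := Relation.ReflTransGen.refl
  have hyM : y ∈ M := Relation.ReflTransGen.single ⟨hxy, hn1, hn2⟩
  have hcomp : ∀ v, v ∉ M → ∀ z ∈ M, limitRel₁ G w v z ∨ limitRel₁ G w z v := by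
    intro v hv z hz
    by_contra hc2
    push_neg at hc2
    apply hv
    rcases eq_or_ne v z with rfl | hne
    · exact hz
    · exact Relation.ReflTransGen.tail hz ⟨hne.symm, hc2.2, hc2.1⟩
  have hstep : ∀ v z z', (limitRel₁ G w v z ∨ limitRel₁ G w z v) →
      (limitRel₁ G w v z' ∨ limitRel₁ G w z' v) → J z z' → G.Adj v z → G.Adj v z' := by
    intro v z z' hvz hvz' hJ hadj
    by_contra hnadj
    have hI2 : ¬ limitRel₂ G w z z' ∧ ¬ limitRel₂ G w z' z := by
      constructor <;> intro h <;> rcases pp_limit₂_comp h with h' | h'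
      · exact hJ.2.1 h'
      · exact hJ.2.2 h'
      · exact hJ.2.2 h'
      · exact hJ.2.1 h'
    rcases hvz with h | h <;> rcases hvz' with h' | h'
    · exact hI2.1 (pp_limit₂_trans (pp_limit₁_adj h hadj) (pp_limit₁_nadj h' hnadj))
    · exact hJ.2.2 (pp_limit₁_trans h' h)
    · exact hJ.2.1 (pp_limit₁_trans h h')
    · exact hI2.2 (pp_limit₂_trans (pp_limit₁_nadj h' (fun hh => hnadj hh.symm))
        (pp_limit₁_adj h hadj.symm))
  have hconst : ∀ v, v ∉ M → ∀ z, z ∈ M → (G.Adj v z ↔ G.Adj v x) := by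
    intro v hv z hz
    have hz' : Relation.ReflTransGen J x z := hz
    induction hz' with
    | refl => exact Iff.rfl
    | @tail b c hab hbc ih =>
      have hbM : b ∈ M := hab
      have hcM : c ∈ M := Relation.ReflTransGen.tail hab hbc
      have h1 : G.Adj v c ↔ G.Adj v b :=
        ⟨hstep v c b (hcomp v hv c hcM) (hcomp v hv b hbM) (hJsymm _ _ hbc),
         hstep v b c (hcomp v hv b hbM) (hcomp v hv c hcM) hbc⟩
      exact h1.trans (ih hbM)
  have hmod : IsModule G M := by
    refine ⟨⟨x, hxM⟩, fun v hv z hz z' hz' => ?_⟩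
    rw [hconst v hv z hz, hconst v hv z' hz']
  rcases hprime M hmod with ⟨c, hc⟩ | huniv
  · rw [hc] at hxM hyM
    exact hxy (hxM.trans hyM.symm)
  · have hxw : x ≠ w := by
      rintro rfl
      exact hn1 (pp_limit₁_base (Ne.symm hxy))
    have hne : ∀ z, Relation.ReflTransGen J x z → z ≠ w := by
      intro z hz
      induction hz with
      | refl => exact hxw
      | tail hab hbc ih =>
        rintro rfl
        exact hbc.2.2 (pp_limit₁_base hbc.1)
    have hwM : w ∈ M := by rw [huniv]; trivial
    exact hne w hwM rfl

/-- Soundness: every stage of the iteration is contained in the realizer. -/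
private lemma pp_sound {r₁ r₂ : V → V → Prop} (hreal : IsRealizer G r₁ r₂)
    (hw : ∀ v, v ≠ w → r₁ w v) (k : ℕ) :
    (∀ a b, (iterRel G w k).1 a b → r₁ a b) ∧
      (∀ a b, (iterRel G w k).2 a b → r₂ a b) := by
  obtain ⟨⟨hir1, htr1, hto1⟩, ⟨hir2, htr2, hto2⟩, hiff⟩ := hreal
  have hasym1 : ∀ a b, r₁ a b → ¬ r₁ b a := fun a b h h' => hir1 a (htr1 a b a h h')
  have hasym2 : ∀ a b, r₂ a b → ¬ r₂ b a := fun a b h h' => hir2 a (htr2 a b a h h')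
  induction k with
  | zero =>
    constructor
    · rintro a b ⟨rfl, hb⟩
      exact hw b hb
    · rintro a b h
      exact h.elim
  | succ k ih =>
    obtain ⟨ih1, ih2⟩ := ih
    have hstep1 : ∀ a b, closE G (iterRel G w k).1 (iterRel G w k).2 a b → r₁ a b := by
      rintro a b (h | ⟨h, hadj⟩ | ⟨h, hnadj⟩)
      · exact ih1 a b h
      · have hr2 : r₂ b a := ih2 b a h
        have hne : b ≠ a := fun e => hir2 a (e ▸ hr2)
        rcases (hiff b a hne).1 hadj with ⟨h1, h2⟩ | ⟨h1, h2⟩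
        · exact absurd h2 (hasym2 b a hr2)
        · exact h1
      · have hr2 : r₂ a b := ih2 a b h
        have hne : a ≠ b := fun e => hir2 b (e ▸ hr2)
        rcases hto1 a b hne with h1 | h1
        · exact h1
        · exact absurd (((hiff b a hne.symm).2 (Or.inl ⟨h1, hr2⟩)).symm) hnadj
    have hstep2 : ∀ a b, closE G (iterRel G w k).2 (iterRel G w k).1 a b → r₂ a b := by
      rintro a b (h | ⟨h, hadj⟩ | ⟨h, hnadj⟩)
      · exact ih2 a b h
      · have hr1 : r₁ b a := ih1 b a h
        have hne : b ≠ a := fun e => hir1 a (e ▸ hr1)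
        rcases (hiff b a hne).1 hadj with ⟨h1, h2⟩ | ⟨h1, h2⟩
        · exact h2
        · exact absurd h1 (hasym1 b a hr1)
      · have hr1 : r₁ a b := ih1 a b h
        have hne : a ≠ b := fun e => hir1 b (e ▸ hr1)
        rcases hto2 a b hne with h2 | h2
        · exact h2
        · exact absurd ((hiff a b hne).2 (Or.inl ⟨hr1, h2⟩)) hnadj
    constructor
    · intro a b h
      have h' : Relation.TransGen (closE G (iterRel G w k).1 (iterRel G w k).2) a b := h
      clear h
      induction h' with
      | single h => exact hstep1 _ _ h
      | tail _ h ihh => exact htr1 _ _ _ ihh (hstep1 _ _ h)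
    · intro a b h
      have h' : Relation.TransGen (closE G (iterRel G w k).2 (iterRel G w k).1) a b := h
      clear h
      induction h' with
      | single h => exact hstep2 _ _ h
      | tail _ h ihh => exact htr2 _ _ _ ihh (hstep2 _ _ h)

/-- The main identification: the closure from the least vertex equals the realizer. -/
private lemma pp_key (hprime : IsPrime G) {r₁ r₂ : V → V → Prop}
    (hreal : IsRealizer G r₁ r₂) (hw : ∀ v, v ≠ w → r₁ w v) :
    limitRel₁ G w = r₁ ∧ limitRel₂ G w = r₂ := by
  obtain ⟨⟨hir1, htr1, hto1⟩, ⟨hir2, htr2, hto2⟩, hiff⟩ := hreal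
  have hasym1 : ∀ a b, r₁ a b → ¬ r₁ b a := fun a b h h' => hir1 a (htr1 a b a h h')
  have hasym2 : ∀ a b, r₂ a b → ¬ r₂ b a := fun a b h h' => hir2 a (htr2 a b a h h')
  have hL1 : ∀ a b, limitRel₁ G w a b → r₁ a b := by
    rintro a b ⟨k, hk⟩
    exact (pp_sound ⟨⟨hir1, htr1, hto1⟩, ⟨hir2, htr2, hto2⟩, hiff⟩ hw k).1 a b hk
  have hL2 : ∀ a b, limitRel₂ G w a b → r₂ a b := by
    rintro a b ⟨k, hk⟩
    exact (pp_sound ⟨⟨hir1, htr1, hto1⟩, ⟨hir2, htr2, hto2⟩, hiff⟩ hw k).2 a b hk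
  have htot := pp_total (G := G) (w := w) hprime
  constructor
  · ext a b
    constructor
    · exact hL1 a b
    · intro h
      have hne : a ≠ b := fun e => hir1 b (e ▸ h)
      rcases htot a b hne with h' | h'
      · exact h'
      · exact absurd h (hasym1 b a (hL1 b a h'))
  · ext a b
    constructor
    · exact hL2 a b
    · intro h
      have hne : a ≠ b := fun e => hir2 b (e ▸ h)
      rcases htot a b hne with h1 | h1
      · have hs1 : r₁ a b := hL1 a b h1
        have hnadj : ¬ G.Adj a b := by
          intro hadj
          rcases (hiff a b hne).1 hadj with ⟨h1', h2'⟩ | ⟨h1', h2'⟩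
          · exact hasym2 a b h h2'
          · exact hasym1 a b hs1 h1'
        exact pp_limit₁_nadj h1 hnadj
      · have hs1 : r₁ b a := hL1 b a h1
        have hadj : G.Adj b a := (hiff b a hne.symm).2 (Or.inl ⟨hs1, h⟩)
        exact pp_limit₁_adj h1 hadj

end PrimePermAux

/-- Let `G` be a prime permutation graph with realizer `(<₁, <₂)` and let `w` be the
least vertex of `<₁`. Then `◁₁^w = <₁` and `◁₂^w = <₂`. In particular, a realizer of a
prime permutation graph is uniquely determined by the least element of its first
linear order. -/
theorem limitRel_eq_realizer_and_unique {V : Type*} [Fintype V] [Nonempty V]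
    (G : SimpleGraph V) (hprime : IsPrime G)
    (r₁ r₂ : V → V → Prop) (hreal : IsRealizer G r₁ r₂)
    (w : V) (hw : ∀ v, v ≠ w → r₁ w v) :
    (limitRel₁ G w = r₁ ∧ limitRel₂ G w = r₂) ∧
    (∀ r₁' r₂' : V → V → Prop, IsRealizer G r₁' r₂' → (∀ v, v ≠ w → r₁' w v) →
      r₁' = r₁ ∧ r₂' = r₂) := by
  have hmain := pp_key (G := G) (w := w) hprime hreal hw
  refine ⟨hmain, fun r₁' r₂' hreal' hw' => ?_⟩
  have hmain' := pp_key (G := G) (w := w) hprime hreal' hw'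
  exact ⟨hmain'.1.symm.trans hmain.1, hmain'.2.symm.trans hmain.2⟩
end
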